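/- arXiv:2410.07483 — 2 statements merged into one kernel-verified Lean document; each statement's English description precedes it below -/
import Mathlib

section
/- (Population double robustness of the DR estimating function.) Fix z ∈ {1,...,J} and g ∈ {J−z+1,...,J}. Let p̃_w : 𝒳 → [c, 1−c] for w ∈ {J−g, J−g+1, z} (with c ∈ (0, 1/2)) and m̃_z : 𝒳 → ℝ be bounded measurable working functions, with the convention p̃_0 := 0. Define ψ̃_{S,w} := 1(Z=w)·(S − p̃_w(X))/π_w + p̃_w(X) (with ψ̃_{S,0} := 0) and ξ̃ := ((p̃_{J−g+1}(X) − p̃_{J−g}(X))/p̃_z(X))·1(Z=z)·S·(Y − m̃_z(X))/π_z + m̃_z(X)·(ψ̃_{S,J−g+1} − ψ̃_{S,J−g}). If either (i) p̃_w = p_w(X) P-a.s. for all w ∈ {J−g, J−g+1, z}, or (ii) m̃_z = m_z(X) P-a.s., then under randomization, monotonicity, principal ignorability and positivity: E[ξ̃] = E[Y_z·1(G=g)] and E[ψ̃_{S,J−g+1} − ψ̃_{S,J−g}] = P(G=g); in particular, if P(G=g) > 0 then E[ξ̃]/E[ψ̃_{S,J−g+1} − ψ̃_{S,J−g}] = E[Y_z·1(G=g)]/P(G=g).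 -/
/-!
Under monotonicity `w ↦ S_w` is an increasing `0/1` sequence, so `1(G = g) = S_{J-g+1} - S_{J-g}`
and `S_z` is the sum of the indicators of the strata `g ∈ {J-z+1, …, J}`. Randomization makes each
inverse-probability-weighted term unbiased for its potential-outcome counterpart, so
`E[h(X) (ψ̃_{S,J-g+1} - ψ̃_{S,J-g})] = E[h(X) 1(G = g)]` for every bounded `h`, whatever the
working scores. Summing principal ignorability over the strata that make up `S_z` gives
`E[Y_z 1(G = g) | X] = m_z(X) e_g(X)`. Hence, with `f = (p̃_{J-g+1} - p̃_{J-g}) / p̃_z`,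
`E[ξ̃] - E[Y_z 1(G = g)] = E[(f(X) p_z(X) - e_g(X)) (m_z(X) - m̃_z(X))]`, a product of the errors
of the two working models; the first factor vanishes for correct scores as
`p_{J-g+1} - p_{J-g} = e_g`.
-/

open MeasureTheory ProbabilityTheory

noncomputable section

namespace TruncationByDeath

variable {Ω : Type*} {𝒳 : Type*} [MeasurableSpace Ω] [MeasurableSpace 𝒳]

/-- The σ-algebra on `Ω` generated by the covariate map `X`. -/
def mX (X : Ω → 𝒳) : MeasurableSpace Ω := MeasurableSpace.comap X inferInstance

/-- Real-valued indicator of the event `{Z = z}`. -/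
def indic (Z : Ω → ℕ) (z : ℕ) : Ω → ℝ := fun ω => if Z ω = z then 1 else 0

/-- Observed survival status `S := ∑_z 1(Z=z) ⬝ S_z`. -/
def Sobs (J : ℕ) (Z : Ω → ℕ) (S : ℕ → Ω → ℝ) : Ω → ℝ :=
  fun ω => ∑ z ∈ Finset.Icc 1 J, indic Z z ω * S z ω

/-- Observed outcome `Y := ∑_z 1(Z=z) ⬝ Y_z`. -/
def Yobs (J : ℕ) (Z : Ω → ℕ) (Y : ℕ → Ω → ℝ) : Ω → ℝ :=
  fun ω => ∑ z ∈ Finset.Icc 1 J, indic Z z ω * Y z ω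

/-- Principal score `p_z(X) := E[S_z | σ(X)]`, with conventions `p_0 := 0` and `p_{J+1} := 1`. -/
def pscore (P : Measure Ω) (X : Ω → 𝒳) (S : ℕ → Ω → ℝ) (J : ℕ) (z : ℕ) : Ω → ℝ :=
  if z = 0 then fun _ => 0 else if z = J + 1 then fun _ => 1 else P[S z | mX X]

/-- Treatment probability `π_z := P(Z = z)`. -/
def piZ (P : Measure Ω) (Z : Ω → ℕ) (z : ℕ) : ℝ := (P {ω | Z ω = z}).toReal

/-- Principal stratum variable `G := ∑_{z=1}^J S_z`. -/
def Gsum (J : ℕ) (S : ℕ → Ω → ℝ) : Ω → ℝ := fun ω => ∑ z ∈ Finset.Icc 1 J, S z ω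

/-- Real-valued indicator of the event `{G = g}`. -/
def indG (J : ℕ) (S : ℕ → Ω → ℝ) (g : ℕ) : Ω → ℝ :=
  Set.indicator {ω | Gsum J S ω = (g : ℝ)} (fun _ => (1 : ℝ))

/-- Principal score of the stratum `g` : `e_g(X) := E[1(G=g) | σ(X)]`. -/
def eg (P : Measure Ω) (X : Ω → 𝒳) (J : ℕ) (S : ℕ → Ω → ℝ) (g : ℕ) : Ω → ℝ :=
  P[indG J S g | mX X]

/-- Basic setup: measurability, ranges, values and integrability of the primitives. -/
structure Setup (P : Measure Ω) (J : ℕ) (X : Ω → 𝒳) (Z : Ω → ℕ)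
    (S Y : ℕ → Ω → ℝ) : Prop where
  hJ : 2 ≤ J
  hX : Measurable X
  hZ : Measurable Z
  hZr : ∀ ω, Z ω ∈ Finset.Icc 1 J
  hSm : ∀ z, Measurable (S z)
  hS01 : ∀ z ω, S z ω = 0 ∨ S z ω = 1
  hYm : ∀ z, Measurable (Y z)
  hYint : ∀ z, Integrable (Y z) P

/-- Randomization : `Z` is independent of `(X, S_1,…,S_J, Y_1,…,Y_J)` and `π_z > 0` for all
`z ∈ {1,…,J}`. -/
def Randomization (P : Measure Ω) (J : ℕ) (X : Ω → 𝒳) (Z : Ω → ℕ)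
    (S Y : ℕ → Ω → ℝ) : Prop :=
  IndepFun Z (fun ω => (X ω, fun z => S z ω, fun z => Y z ω)) P ∧
    ∀ z ∈ Finset.Icc 1 J, 0 < piZ P Z z

/-- Monotonicity : `S_{z'} ≤ S_z` a.s. whenever `z' ≤ z`. -/
def Monotonicity (P : Measure Ω) (J : ℕ) (S : ℕ → Ω → ℝ) : Prop :=
  ∀ z ∈ Finset.Icc 1 J, ∀ z' ∈ Finset.Icc 1 J, z' ≤ z → ∀ᵐ ω ∂P, S z' ω ≤ S z ω

/-- Principal ignorability. -/
def PrincipalIgnorability (P : Measure Ω) (J : ℕ) (X : Ω → 𝒳)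
    (S Y : ℕ → Ω → ℝ) : Prop :=
  ∀ z ∈ Finset.Icc 1 J, ∀ g ∈ Finset.Icc (J - z + 1) J, ∀ g' ∈ Finset.Icc (J - z + 1) J,
    (fun ω => (P[fun ω' => Y z ω' * indG J S g ω' | mX X]) ω * eg P X J S g' ω)
      =ᵐ[P] fun ω => (P[fun ω' => Y z ω' * indG J S g' ω' | mX X]) ω * eg P X J S g ω

/-- Positivity : the principal scores are uniformly bounded away from zero. -/
def Positivity (P : Measure Ω) (J : ℕ) (X : Ω → 𝒳) (S : ℕ → Ω → ℝ) : Prop :=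
  ∃ c : ℝ, 0 < c ∧ ∀ z ∈ Finset.Icc 1 J, ∀ᵐ ω ∂P, c ≤ pscore P X S J z ω

/-- Working principal score `p̃_w(X)`, with the convention `p̃_0 := 0`. -/
def workP (X : Ω → 𝒳) (pt : ℕ → 𝒳 → ℝ) (w : ℕ) : Ω → ℝ :=
  if w = 0 then fun _ => 0 else fun ω => pt w (X ω)

/-- Augmented survival term built from working principal scores, with `ψ̃_{S,0} := 0`. -/
def psiSW (P : Measure Ω) (X : Ω → 𝒳) (Z : Ω → ℕ) (S : ℕ → Ω → ℝ) (J : ℕ)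
    (pt : ℕ → 𝒳 → ℝ) (w : ℕ) : Ω → ℝ :=
  if w = 0 then fun _ => 0
  else fun ω =>
    indic Z w ω * (Sobs J Z S ω - workP X pt w ω) / piZ P Z w + workP X pt w ω


open Finset

section MonotoneZeroOne

variable {J : ℕ} {s : ℕ → ℝ}

lemma sum_Icc_add_le_of_eq_zero (hmono : ∀ a b, a ≤ b → b ≤ J → s a ≤ s b)
    (hs1 : ∀ w, s w ≤ 1) {a : ℕ} (haJ : a ≤ J) (ha : s a = 0) :
    ∑ w ∈ Icc 1 J, s w + a ≤ J := by
  have hcount : ∑ w ∈ Icc 1 J, s w ≤ (J - a : ℕ) :=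
    calc ∑ w ∈ Icc 1 J, s w ≤ ∑ w ∈ Icc 1 J, if a < w then (1 : ℝ) else 0 := by
          refine sum_le_sum fun w _ => ?_
          split_ifs with h
          · exact hs1 w
          · exact ha ▸ hmono w a (not_lt.1 h) haJ
      _ = (J - a : ℕ) := by
          rw [sum_boole, ← Nat.card_Ioc]
          congr 2
          ext w
          simp only [mem_filter, mem_Icc, mem_Ioc]
          omega
  rw [Nat.cast_sub haJ] at hcount
  linarith

lemma le_sum_Icc_add_of_eq_one (hmono : ∀ a b, a ≤ b → b ≤ J → s a ≤ s b)
    (hs0 : ∀ w, 0 ≤ s w) {a : ℕ} (ha1 : 1 ≤ a) (haJ : a ≤ J) (ha : s a = 1) :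
    (J : ℝ) + 1 ≤ ∑ w ∈ Icc 1 J, s w + a := by
  have hcount : ((J + 1 - a : ℕ) : ℝ) ≤ ∑ w ∈ Icc 1 J, s w :=
    calc ((J + 1 - a : ℕ) : ℝ) = ∑ w ∈ Icc 1 J, if a ≤ w then (1 : ℝ) else 0 := by
          rw [sum_boole, ← Nat.card_Icc]
          congr 2
          ext w
          simp only [mem_filter, mem_Icc]
          omega
      _ ≤ ∑ w ∈ Icc 1 J, s w := by
          refine sum_le_sum fun w hw => ?_
          split_ifs with h
          · exact ha ▸ hmono a w h (mem_Icc.1 hw).2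
          · exact hs0 w
  rw [Nat.cast_sub (by omega), Nat.cast_add, Nat.cast_one] at hcount
  linarith

lemma ite_sum_Icc_eq_sub (h01 : ∀ w, s w = 0 ∨ s w = 1)
    (hmono : ∀ a b, a ≤ b → b ≤ J → s a ≤ s b) (h0 : s 0 = 0) {g : ℕ} (hg : g ∈ Icc 1 J) :
    (if ∑ w ∈ Icc 1 J, s w = g then (1 : ℝ) else 0) = s (J - g + 1) - s (J - g) := by
  obtain ⟨hg1, hgJ⟩ := mem_Icc.1 hg
  have hs0 : ∀ w, 0 ≤ s w := fun w => by rcases h01 w with h | h <;> simp [h]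
  have hs1 : ∀ w, s w ≤ 1 := fun w => by rcases h01 w with h | h <;> simp [h]
  have hJ : ((J - g : ℕ) : ℝ) = J - g := Nat.cast_sub hgJ
  have hstep := hmono (J - g) (J - g + 1) (by omega) (by omega)
  rcases h01 (J - g + 1) with htop | htop
  · have hlow : s (J - g) = 0 := le_antisymm (htop ▸ hstep) (hs0 _)
    have := sum_Icc_add_le_of_eq_zero hmono hs1 (by omega) htop
    push_cast at this
    rw [if_neg (by linarith), htop, hlow, sub_zero]
  rcases h01 (J - g) with hlow | hlow
  · have := sum_Icc_add_le_of_eq_zero hmono hs1 (by omega) hlow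
    have := le_sum_Icc_add_of_eq_one hmono hs0 (by omega) (by omega) htop
    push_cast at this
    rw [if_pos (by linarith), htop, hlow, sub_zero]
  · have hpos : 1 ≤ J - g := Nat.one_le_iff_ne_zero.2 fun h => by simp [h, h0] at hlow
    have := le_sum_Icc_add_of_eq_one hmono hs0 hpos (by omega) hlow
    rw [if_neg (by linarith), htop, hlow, sub_self]

lemma sum_Icc_sub_eq (s : ℕ → ℝ) {z : ℕ} (hz : z ≤ J) :
    ∑ g ∈ Icc (J - z + 1) J, (s (J - g + 1) - s (J - g)) = s z - s 0 := by
  rw [← sum_range_sub]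
  refine sum_nbij' (fun g => J - g) (fun k => J - k) ?_ ?_ ?_ ?_ fun _ _ => rfl <;>
    intro a ha <;> simp only [mem_Icc, mem_range] at ha ⊢ <;> omega

end MonotoneZeroOne

lemma mX_le {X : Ω → 𝒳} (hX : Measurable X) : mX X ≤ ‹MeasurableSpace Ω› := hX.comap_le

section Independence

variable {P : Measure Ω} {Z : Ω → ℕ}

lemma measurable_indic (hZ : Measurable Z) (w : ℕ) : Measurable (indic Z w) :=
  (measurable_from_top (f := fun n : ℕ => if n = w then (1 : ℝ) else 0)).comp hZ

omit [MeasurableSpace Ω] in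
lemma norm_indic_le_one (w : ℕ) (ω : Ω) : ‖indic Z w ω‖ ≤ 1 := by
  by_cases h : Z ω = w <;> simp [indic, h]

lemma integral_indic (hZ : Measurable Z) (w : ℕ) : ∫ ω, indic Z w ω ∂P = piZ P Z w := by
  have : indic Z w = (Z ⁻¹' {w}).indicator 1 := by
    ext ω
    by_cases h : Z ω = w <;> simp [indic, h]
  rw [this, integral_indicator_one (hZ (measurableSet_singleton w))]
  rfl

lemma integral_indic_mul {V : Ω → ℝ} (hZ : Measurable Z) (hV : AEStronglyMeasurable V P)
    (hind : IndepFun Z V P) (w : ℕ) :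
    ∫ ω, indic Z w ω * V ω ∂P = piZ P Z w * ∫ ω, V ω ∂P := by
  have hind' : IndepFun (indic Z w) V P :=
    hind.comp (φ := fun n => if n = w then (1 : ℝ) else 0) measurable_from_top measurable_id
  rw [hind'.integral_fun_mul_eq_mul_integral (measurable_indic hZ w).aestronglyMeasurable hV,
    integral_indic hZ]

lemma integral_indic_mul_div {V : Ω → ℝ} (hZ : Measurable Z) (hV : AEStronglyMeasurable V P)
    (hind : IndepFun Z V P) {w : ℕ} (hπ : piZ P Z w ≠ 0) :
    ∫ ω, indic Z w ω * V ω / piZ P Z w ∂P = ∫ ω, V ω ∂P := by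
  rw [integral_div, integral_indic_mul hZ hV hind, mul_div_cancel_left₀ _ hπ]

lemma indepFun_of_measurable_comap {β : Type*} [MeasurableSpace β] {T : Ω → β}
    (hind : IndepFun Z T P) {V : Ω → ℝ} (hV : Measurable[MeasurableSpace.comap T inferInstance] V) :
    IndepFun Z V P :=
  (IndepFun_iff_Indep _ _ _).2 (indep_of_indep_of_le_right ((IndepFun_iff_Indep _ _ _).1 hind)
    hV.comap_le)

variable [IsProbabilityMeasure P]

lemma condExp_indic_mul_ae_eq {X : Ω → 𝒳} {β : Type*} [MeasurableSpace β] {T : Ω → β}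
    (hX : Measurable X) (hZ : Measurable Z) (hind : IndepFun Z T P)
    (hXT : Measurable[MeasurableSpace.comap T inferInstance] X)
    {V : Ω → ℝ} (hVm : Measurable[MeasurableSpace.comap T inferInstance] V)
    (hV : Integrable V P) (w : ℕ) :
    P[fun ω => indic Z w ω * V ω | mX X] =ᵐ[P] fun ω => piZ P Z w * P[V | mX X] ω := by
  have hm := mX_le hX
  refine (ae_eq_condExp_of_forall_setIntegral_eq hm
    (hV.bdd_mul (measurable_indic hZ w).aestronglyMeasurable (.of_forall (norm_indic_le_one w)))
    (fun s _ _ => (integrable_condExp.const_mul _).integrableOn) (fun s hs _ => ?_)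
    (stronglyMeasurable_condExp.const_mul _).aestronglyMeasurable).symm
  have hVs : Measurable[MeasurableSpace.comap T inferInstance] (s.indicator V) :=
    hVm.indicator (hXT.comap_le s hs)
  calc ∫ ω in s, piZ P Z w * P[V | mX X] ω ∂P
      = piZ P Z w * ∫ ω, s.indicator V ω ∂P := by
        rw [integral_const_mul, setIntegral_condExp hm hV hs, integral_indicator (hm s hs)]
    _ = ∫ ω in s, indic Z w ω * V ω ∂P := by
        rw [← integral_indic_mul hZ (hV.indicator (hm s hs)).aestronglyMeasurable
          (indepFun_of_measurable_comap hind hVs), ← integral_indicator (hm s hs)]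
        simp only [Set.indicator_mul_right]

end Independence

def BoundedXMeasurable (X : Ω → 𝒳) (φ : Ω → ℝ) : Prop :=
  Measurable[mX X] φ ∧ ∃ C, ∀ ω, ‖φ ω‖ ≤ C

namespace BoundedXMeasurable

variable {X : Ω → 𝒳} {φ ψ : Ω → ℝ}

section

omit [MeasurableSpace Ω]

lemma comp {h : 𝒳 → ℝ} (hh : Measurable h) {C : ℝ} (hC : ∀ x, |h x| ≤ C) :
    BoundedXMeasurable X fun ω => h (X ω) :=
  ⟨hh.comp (comap_measurable X), C, fun ω => hC (X ω)⟩

lemma const (c : ℝ) : BoundedXMeasurable X fun _ => c := ⟨measurable_const, ‖c‖, fun _ => le_rfl⟩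

lemma workP {pt : ℕ → 𝒳 → ℝ} {w : ℕ} {c : ℝ} (hpt : Measurable (pt w))
    (hb : w ≠ 0 → ∀ x, pt w x ∈ Set.Icc c (1 - c)) : BoundedXMeasurable X (workP X pt w) := by
  unfold TruncationByDeath.workP
  split_ifs with hw
  · exact const 0
  · exact comp hpt fun x => abs_le_max_abs_abs (hb hw x).1 (hb hw x).2

lemma mul (hφ : BoundedXMeasurable X φ) (hψ : BoundedXMeasurable X ψ) :
    BoundedXMeasurable X fun ω => φ ω * ψ ω := by
  obtain ⟨hφm, C, hC⟩ := hφ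
  obtain ⟨hψm, D, hD⟩ := hψ
  exact ⟨hφm.mul hψm, C * D, fun ω => (norm_mul_le _ _).trans
    (mul_le_mul (hC ω) (hD ω) (norm_nonneg _) ((norm_nonneg _).trans (hC ω)))⟩

lemma sub (hφ : BoundedXMeasurable X φ) (hψ : BoundedXMeasurable X ψ) :
    BoundedXMeasurable X fun ω => φ ω - ψ ω := by
  obtain ⟨hφm, C, hC⟩ := hφ
  obtain ⟨hψm, D, hD⟩ := hψ
  exact ⟨hφm.sub hψm, C + D, fun ω => (norm_sub_le _ _).trans (add_le_add (hC ω) (hD ω))⟩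

lemma div_of_le (hφ : BoundedXMeasurable X φ) (hψ : BoundedXMeasurable X ψ) {c : ℝ}
    (hc : 0 < c) (hcψ : ∀ ω, c ≤ ψ ω) : BoundedXMeasurable X fun ω => φ ω / ψ ω := by
  obtain ⟨hφm, C, hC⟩ := hφ
  refine ⟨hφm.div hψ.1, C / c, fun ω => ?_⟩
  rw [norm_div, Real.norm_of_nonneg (hc.le.trans (hcψ ω))]
  exact div_le_div₀ ((norm_nonneg _).trans (hC ω)) (hC ω) hc (hcψ ω)

end

variable {P : Measure Ω}

lemma measurable (hX : Measurable X) (hφ : BoundedXMeasurable X φ) : Measurable φ :=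
  hφ.1.mono (mX_le hX) le_rfl

lemma integrable [IsFiniteMeasure P] (hX : Measurable X) (hφ : BoundedXMeasurable X φ) :
    Integrable φ P :=
  .of_bound (hφ.measurable hX).aestronglyMeasurable hφ.2.choose (.of_forall hφ.2.choose_spec)

lemma integrable_mul (hX : Measurable X) (hφ : BoundedXMeasurable X φ) {V : Ω → ℝ}
    (hV : Integrable V P) : Integrable (fun ω => φ ω * V ω) P :=
  hV.bdd_mul (hφ.measurable hX).aestronglyMeasurable (.of_forall hφ.2.choose_spec)

lemma integral_mul_condExp [IsFiniteMeasure P] (hX : Measurable X) (hφ : BoundedXMeasurable X φ)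
    {V : Ω → ℝ} (hV : Integrable V P) :
    ∫ ω, φ ω * P[V | mX X] ω ∂P = ∫ ω, φ ω * V ω ∂P := by
  rw [← integral_condExp (mX_le hX) (f := fun ω => φ ω * V ω)]
  exact integral_congr_ae (condExp_stronglyMeasurable_mul_of_bound (mX_le hX)
    hφ.1.stronglyMeasurable hV _ (.of_forall hφ.2.choose_spec)).symm

end BoundedXMeasurable

/-- `S_w` with the convention `S_0 = 0`, matching `p_0 = 0`. -/
def survival (S : ℕ → Ω → ℝ) (w : ℕ) : Ω → ℝ := if w = 0 then 0 else S w

/-- The σ-algebra of the covariates and all potential outcomes; randomization makes `Z`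
independent of it. -/
abbrev mPot (X : Ω → 𝒳) (S Y : ℕ → Ω → ℝ) : MeasurableSpace Ω :=
  MeasurableSpace.comap (fun ω => (X ω, fun z => S z ω, fun z => Y z ω)) inferInstance

section Potential

variable {J : ℕ} {X : Ω → 𝒳} {Z : Ω → ℕ} {S Y : ℕ → Ω → ℝ}

section

omit [MeasurableSpace Ω]

lemma survival_of_ne_zero {w : ℕ} (hw : w ≠ 0) : survival S w = S w := if_neg hw

lemma measurable_mPot :
    Measurable[mPot X S Y] fun ω => (X ω, fun z => S z ω, fun z => Y z ω) :=
  comap_measurable _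

lemma measurable_mPot_X : Measurable[mPot X S Y] X := measurable_mPot.fst

lemma measurable_mPot_S (w : ℕ) : Measurable[mPot X S Y] (S w) :=
  (measurable_pi_apply w).comp measurable_mPot.snd.fst

lemma measurable_mPot_Y (w : ℕ) : Measurable[mPot X S Y] (Y w) :=
  (measurable_pi_apply w).comp measurable_mPot.snd.snd

lemma mX_le_mPot : mX X ≤ mPot X S Y := measurable_mPot_X.comap_le

lemma indic_mul_sum_indic_mul (F : ℕ → Ω → ℝ) {w : ℕ} (hw : w ∈ Icc 1 J) (ω : Ω) :
    indic Z w ω * ∑ z ∈ Icc 1 J, indic Z z ω * F z ω = indic Z w ω * F w ω := by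
  by_cases h : Z ω = w
  · rw [sum_eq_single_of_mem w hw fun z _ hz => by simp [indic, h, Ne.symm hz]]
    simp [indic, h]
  · simp [indic, h]

lemma indic_mul_Sobs {w : ℕ} (hw : w ∈ Icc 1 J) (ω : Ω) :
    indic Z w ω * Sobs J Z S ω = indic Z w ω * S w ω :=
  indic_mul_sum_indic_mul S hw ω

lemma indic_mul_Yobs {w : ℕ} (hw : w ∈ Icc 1 J) (ω : Ω) :
    indic Z w ω * Yobs J Z Y ω = indic Z w ω * Y w ω :=
  indic_mul_sum_indic_mul Y hw ω

end

variable {P : Measure Ω}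

lemma pscore_eq_condExp_survival {w : ℕ} (hw : w ≤ J) :
    pscore P X S J w = P[survival S w | mX X] := by
  unfold pscore survival
  split_ifs
  · rw [condExp_zero]
    rfl
  · omega
  · rfl

omit [MeasurableSpace 𝒳] in
lemma psiSW_eq {pt : ℕ → 𝒳 → ℝ} {w : ℕ} (hw : w ∈ Icc 1 J) (ω : Ω) :
    psiSW P X Z S J pt w ω
      = indic Z w ω * (S w ω - workP X pt w ω) / piZ P Z w + workP X pt w ω := by
  rw [psiSW, if_neg (by simp only [mem_Icc] at hw; omega), mul_sub, mul_sub,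
    indic_mul_Sobs hw]

namespace Setup

variable (hset : Setup P J X Z S Y)
include hset

lemma norm_S_le_one (w : ℕ) (ω : Ω) : ‖S w ω‖ ≤ 1 := by
  rcases hset.hS01 w ω with h | h <;> simp [h]

lemma integrable_S [IsFiniteMeasure P] (w : ℕ) : Integrable (S w) P :=
  .of_bound (hset.hSm w).aestronglyMeasurable 1 (.of_forall (hset.norm_S_le_one w))

lemma integrable_survival [IsFiniteMeasure P] (w : ℕ) : Integrable (survival S w) P := by
  unfold survival
  split_ifs
  · exact integrable_zero _ _ _
  · exact hset.integrable_S w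

lemma ae_survival_mono (hmono : Monotonicity P J S) :
    ∀ᵐ ω ∂P, ∀ a b, a ≤ b → b ≤ J → survival S a ω ≤ survival S b ω := by
  refine ae_all_iff.2 fun a => ae_all_iff.2 fun b => ?_
  rcases Nat.eq_zero_or_pos a with rfl | ha
  · refine .of_forall fun ω _ _ => ?_
    have : 0 ≤ S b ω := (hset.hS01 b ω).elim (fun h => h.ge) (fun h => h ▸ zero_le_one)
    by_cases hb : b = 0 <;> simp [survival, hb, this]
  by_cases hab : a ≤ b ∧ b ≤ J
  · filter_upwards [hmono b (mem_Icc.2 ⟨by omega, hab.2⟩) a (mem_Icc.2 ⟨ha, by omega⟩) hab.1]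
      with ω hω _ _
    rwa [survival_of_ne_zero (by omega), survival_of_ne_zero (by omega)]
  · exact .of_forall fun ω h1 h2 => absurd ⟨h1, h2⟩ hab

lemma indG_ae_eq_survival_sub (hmono : Monotonicity P J S) {g : ℕ} (hg : g ∈ Icc 1 J) :
    indG J S g =ᵐ[P] survival S (J - g + 1) - survival S (J - g) := by
  filter_upwards [hset.ae_survival_mono hmono] with ω hω
  have h01 : ∀ w, survival S w ω = 0 ∨ survival S w ω = 1 := fun w => by
    by_cases hw : w = 0
    · simp [survival, hw]
    · exact survival_of_ne_zero (S := S) hw ▸ hset.hS01 w ω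
  have hG : Gsum J S ω = ∑ w ∈ Icc 1 J, survival S w ω :=
    sum_congr rfl fun w hw => by rw [survival_of_ne_zero (by simp at hw; omega)]
  simp only [indG, Set.indicator_apply, Set.mem_ofPred_eq, hG, Pi.sub_apply]
  exact ite_sum_Icc_eq_sub h01 hω (by simp [survival]) hg

lemma survival_ae_eq_sum_indG (hmono : Monotonicity P J S) {z : ℕ} (hz : z ∈ Icc 1 J) :
    S z =ᵐ[P] ∑ g ∈ Icc (J - z + 1) J, indG J S g := by
  obtain ⟨hz1, hzJ⟩ := mem_Icc.1 hz
  have h := (Filter.eventually_all_finset (Icc (J - z + 1) J)).2 fun g hg =>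
    hset.indG_ae_eq_survival_sub hmono (g := g) (by simp only [mem_Icc] at hg ⊢; omega)
  filter_upwards [h] with ω hω
  rw [Finset.sum_apply, sum_congr rfl hω]
  simp only [Pi.sub_apply]
  rw [sum_Icc_sub_eq (fun w => survival S w ω) hzJ]
  simp [survival, Nat.one_le_iff_ne_zero.1 hz1]

lemma eg_ae_eq_pscore_sub [IsFiniteMeasure P] (hmono : Monotonicity P J S) {g : ℕ}
    (hg : g ∈ Icc 1 J) :
    eg P X J S g =ᵐ[P] pscore P X S J (J - g + 1) - pscore P X S J (J - g) := by
  obtain ⟨hg1, hgJ⟩ := mem_Icc.1 hg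
  rw [pscore_eq_condExp_survival (w := J - g + 1) (by omega),
    pscore_eq_condExp_survival (w := J - g) (by omega)]
  exact (condExp_congr_ae (hset.indG_ae_eq_survival_sub hmono hg)).trans
    (condExp_sub (hset.integrable_survival _) (hset.integrable_survival _) _)

lemma integrable_psiSW [IsFiniteMeasure P] {pt : ℕ → 𝒳 → ℝ} {w : ℕ} (hw : w ≤ J)
    (hp : BoundedXMeasurable X (workP X pt w)) : Integrable (psiSW P X Z S J pt w) P := by
  rcases Nat.eq_zero_or_pos w with rfl | hw1
  · exact integrable_zero _ _ _
  have hψ : psiSW P X Z S J pt w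
      = fun ω => indic Z w ω * (S w ω - workP X pt w ω) / piZ P Z w + workP X pt w ω :=
    funext (psiSW_eq (mem_Icc.2 ⟨hw1, hw⟩))
  rw [hψ]
  exact ((((hset.integrable_S w).sub (hp.integrable hset.hX)).bdd_mul
    (measurable_indic hset.hZ w).aestronglyMeasurable
    (.of_forall (norm_indic_le_one w))).div_const _).add (hp.integrable hset.hX)

lemma integral_mul_psiSW [IsProbabilityMeasure P] (hrand : Randomization P J X Z S Y)
    {pt : ℕ → 𝒳 → ℝ} {w : ℕ} (hw : w ≤ J) (hp : BoundedXMeasurable X (workP X pt w))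
    {φ : Ω → ℝ} (hφ : BoundedXMeasurable X φ) :
    ∫ ω, φ ω * psiSW P X Z S J pt w ω ∂P = ∫ ω, φ ω * survival S w ω ∂P := by
  rcases Nat.eq_zero_or_pos w with rfl | hw1
  · simp [psiSW, survival]
  have hwJ : w ∈ Icc 1 J := mem_Icc.2 ⟨hw1, hw⟩
  set V := fun ω => φ ω * (S w ω - workP X pt w ω)
  have hVm : Measurable[mPot X S Y] V :=
    (hφ.1.mono mX_le_mPot le_rfl).mul ((measurable_mPot_S w).sub (hp.1.mono mX_le_mPot le_rfl))
  have hV : Integrable V P :=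
    hφ.integrable_mul hset.hX ((hset.integrable_S w).sub (hp.integrable hset.hX))
  have hφp : Integrable (fun ω => φ ω * workP X pt w ω) P :=
    hφ.integrable_mul hset.hX (hp.integrable hset.hX)
  calc ∫ ω, φ ω * psiSW P X Z S J pt w ω ∂P
      = ∫ ω, (indic Z w ω * V ω / piZ P Z w + φ ω * workP X pt w ω) ∂P := by
        refine integral_congr_ae (.of_forall fun ω => ?_)
        simp only [psiSW_eq hwJ, V]
        ring
    _ = ∫ ω, V ω ∂P + ∫ ω, φ ω * workP X pt w ω ∂P := by
        rw [integral_add ((hV.bdd_mul (measurable_indic hset.hZ w).aestronglyMeasurable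
          (.of_forall (norm_indic_le_one w))).div_const _) hφp,
          integral_indic_mul_div hset.hZ hV.aestronglyMeasurable
            (indepFun_of_measurable_comap hrand.1 hVm) (hrand.2 w hwJ).ne']
    _ = ∫ ω, φ ω * survival S w ω ∂P := by
        rw [← integral_add hV hφp, survival_of_ne_zero (by omega)]
        exact integral_congr_ae (.of_forall fun ω => by ring)

lemma integral_mul_psiSW_sub [IsProbabilityMeasure P] (hrand : Randomization P J X Z S Y)
    (hmono : Monotonicity P J S) {pt : ℕ → 𝒳 → ℝ} {g : ℕ} (hg : g ∈ Icc 1 J)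
    (hp₁ : BoundedXMeasurable X (workP X pt (J - g + 1)))
    (hp₀ : BoundedXMeasurable X (workP X pt (J - g))) {φ : Ω → ℝ}
    (hφ : BoundedXMeasurable X φ) :
    ∫ ω, φ ω * (psiSW P X Z S J pt (J - g + 1) ω - psiSW P X Z S J pt (J - g) ω) ∂P
      = ∫ ω, φ ω * indG J S g ω ∂P := by
  obtain ⟨hg1, hgJ⟩ := mem_Icc.1 hg
  simp_rw [mul_sub]
  rw [integral_sub (hφ.integrable_mul hset.hX (hset.integrable_psiSW (by omega) hp₁))
      (hφ.integrable_mul hset.hX (hset.integrable_psiSW (by omega) hp₀)),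
    hset.integral_mul_psiSW hrand (by omega) hp₁ hφ,
    hset.integral_mul_psiSW hrand (by omega) hp₀ hφ,
    ← integral_sub (hφ.integrable_mul hset.hX (hset.integrable_survival _))
      (hφ.integrable_mul hset.hX (hset.integrable_survival _))]
  refine integral_congr_ae ?_
  filter_upwards [hset.indG_ae_eq_survival_sub hmono hg] with ω hω
  rw [hω, Pi.sub_apply, mul_sub]

lemma measurableSet_Gsum_eq (g : ℕ) : MeasurableSet {ω | Gsum J S ω = (g : ℝ)} :=
  (Finset.measurable_sum _ fun w _ => hset.hSm w) (measurableSet_singleton _)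

lemma integrable_indG [IsFiniteMeasure P] (g : ℕ) : Integrable (indG J S g) P :=
  (integrable_const 1).indicator (hset.measurableSet_Gsum_eq g)

lemma integrable_mul_indG (z g : ℕ) : Integrable (fun ω => Y z ω * indG J S g ω) P :=
  (hset.hYint z).mul_bdd
    ((measurable_const.indicator (hset.measurableSet_Gsum_eq g)).aestronglyMeasurable)
    (.of_forall fun ω => (norm_indicator_le_norm_self (fun _ => (1 : ℝ)) ω).trans norm_one.le)

lemma integrable_mul_S (z : ℕ) : Integrable (fun ω => Y z ω * S z ω) P :=
  (hset.hYint z).mul_bdd (hset.hSm z).aestronglyMeasurable (.of_forall (hset.norm_S_le_one z))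

lemma integrable_S_mul_sub (z : ℕ) {m : Ω → ℝ} (hm : Integrable m P) :
    Integrable (fun ω => S z ω * (Y z ω - m ω)) P :=
  ((hset.hYint z).sub hm).bdd_mul (hset.hSm z).aestronglyMeasurable
    (.of_forall (hset.norm_S_le_one z))

lemma integral_mul_ipw_outcome [IsProbabilityMeasure P] (hrand : Randomization P J X Z S Y)
    {z : ℕ} (hz : z ∈ Icc 1 J) {f m : Ω → ℝ} (hf : BoundedXMeasurable X f)
    (hm : BoundedXMeasurable X m) :
    ∫ ω, f ω * (indic Z z ω * (S z ω * (Y z ω - m ω)) / piZ P Z z) ∂P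
      = ∫ ω, f ω * (P[fun ω => Y z ω * S z ω | mX X] ω - m ω * P[S z | mX X] ω) ∂P := by
  set V := fun ω => f ω * (S z ω * (Y z ω - m ω))
  have hVm : Measurable[mPot X S Y] V := (hf.1.mono mX_le_mPot le_rfl).mul
    ((measurable_mPot_S z).mul ((measurable_mPot_Y z).sub (hm.1.mono mX_le_mPot le_rfl)))
  have hV : Integrable V P :=
    hf.integrable_mul hset.hX (hset.integrable_S_mul_sub z (hm.integrable hset.hX))
  have hfm := hf.mul hm
  calc ∫ ω, f ω * (indic Z z ω * (S z ω * (Y z ω - m ω)) / piZ P Z z) ∂P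
      = ∫ ω, indic Z z ω * V ω / piZ P Z z ∂P :=
        integral_congr_ae (.of_forall fun ω => by simp only [V]; ring)
    _ = ∫ ω, (f ω * (Y z ω * S z ω) - (f ω * m ω) * S z ω) ∂P := by
        rw [integral_indic_mul_div hset.hZ hV.aestronglyMeasurable
          (indepFun_of_measurable_comap hrand.1 hVm) (hrand.2 z hz).ne']
        exact integral_congr_ae (.of_forall fun ω => by simp only [V]; ring)
    _ = ∫ ω, (f ω * P[fun ω => Y z ω * S z ω | mX X] ω - (f ω * m ω) * P[S z | mX X] ω) ∂P := by
        rw [integral_sub (hf.integrable_mul hset.hX (hset.integrable_mul_S z))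
            (hfm.integrable_mul hset.hX (hset.integrable_S z)),
          integral_sub (hf.integrable_mul hset.hX integrable_condExp)
            (hfm.integrable_mul hset.hX integrable_condExp),
          hf.integral_mul_condExp hset.hX (hset.integrable_mul_S z),
          hfm.integral_mul_condExp hset.hX (hset.integrable_S z)]
    _ = ∫ ω, f ω * (P[fun ω => Y z ω * S z ω | mX X] ω - m ω * P[S z | mX X] ω) ∂P :=
        integral_congr_ae (.of_forall fun ω => by ring)

lemma condExp_mul_S_ae_eq [IsProbabilityMeasure P] (hrand : Randomization P J X Z S Y) {z : ℕ}
    (hz : z ∈ Icc 1 J) {mz : Ω → ℝ}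
    (hmz : (fun ω => mz ω * piZ P Z z * pscore P X S J z ω)
      =ᵐ[P] P[fun ω => Yobs J Z Y ω * Sobs J Z S ω * indic Z z ω | mX X]) :
    P[fun ω => Y z ω * S z ω | mX X] =ᵐ[P] fun ω => mz ω * pscore P X S J z ω := by
  have hobs : (fun ω => indic Z z ω * (Y z ω * S z ω))
      = fun ω => Yobs J Z Y ω * Sobs J Z S ω * indic Z z ω := funext fun ω => by
    linear_combination (-Yobs J Z Y ω) * indic_mul_Sobs (S := S) hz ω
      - S z ω * indic_mul_Yobs (Y := Y) hz ω
  have h := condExp_indic_mul_ae_eq (V := fun ω => Y z ω * S z ω) hset.hX hset.hZ hrand.1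
    measurable_mPot_X ((measurable_mPot_Y z).mul (measurable_mPot_S z)) (hset.integrable_mul_S z) z
  rw [hobs] at h
  filter_upwards [h, hmz] with ω h1 h2
  refine mul_left_cancel₀ (hrand.2 z hz).ne' ?_
  rw [← h1, ← h2]
  ring

lemma condExp_mul_indG_mul_pscore_ae_eq [IsFiniteMeasure P] (hmono : Monotonicity P J S)
    (hPI : PrincipalIgnorability P J X S Y) {z g : ℕ} (hz : z ∈ Icc 1 J)
    (hg : g ∈ Icc (J - z + 1) J) :
    (fun ω => P[fun ω => Y z ω * indG J S g ω | mX X] ω * pscore P X S J z ω)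
      =ᵐ[P] fun ω => P[fun ω => Y z ω * S z ω | mX X] ω * eg P X J S g ω := by
  obtain ⟨hz1, hzJ⟩ := mem_Icc.1 hz
  have hsum := hset.survival_ae_eq_sum_indG hmono hz
  have hp : pscore P X S J z =ᵐ[P] ∑ g' ∈ Icc (J - z + 1) J, eg P X J S g' := by
    rw [pscore_eq_condExp_survival hzJ, survival_of_ne_zero (by omega)]
    exact (condExp_congr_ae hsum).trans
      (condExp_finsetSum (fun g' _ => hset.integrable_indG g') _)
  have hW : P[fun ω => Y z ω * S z ω | mX X]
      =ᵐ[P] ∑ g' ∈ Icc (J - z + 1) J, P[fun ω => Y z ω * indG J S g' ω | mX X] := by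
    refine (condExp_congr_ae (hsum.mono fun ω h => ?_)).trans
      (condExp_finsetSum (fun g' _ => hset.integrable_mul_indG z g') _)
    simp only [h, Finset.sum_apply, Finset.mul_sum]
  filter_upwards [hp, hW, (Filter.eventually_all_finset _).2 fun g' hg' => hPI z hz g hg g' hg']
    with ω hpω hWω hPIω
  rw [hpω, hWω, Finset.sum_apply, Finset.sum_apply, Finset.mul_sum, Finset.sum_mul]
  exact sum_congr rfl hPIω

lemma condExp_mul_indG_ae_eq [IsProbabilityMeasure P] (hrand : Randomization P J X Z S Y)
    (hmono : Monotonicity P J S) (hPI : PrincipalIgnorability P J X S Y)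
    (hpos : Positivity P J X S) {z g : ℕ} (hz : z ∈ Icc 1 J) (hg : g ∈ Icc (J - z + 1) J)
    {mz : Ω → ℝ} (hmz : (fun ω => mz ω * piZ P Z z * pscore P X S J z ω)
      =ᵐ[P] P[fun ω => Yobs J Z Y ω * Sobs J Z S ω * indic Z z ω | mX X]) :
    P[fun ω => Y z ω * indG J S g ω | mX X] =ᵐ[P] fun ω => mz ω * eg P X J S g ω := by
  obtain ⟨c, hc, hcp⟩ := hpos
  filter_upwards [hset.condExp_mul_indG_mul_pscore_ae_eq hmono hPI hz hg,
    hset.condExp_mul_S_ae_eq hrand hz hmz, hcp z hz] with ω h1 h2 h3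
  refine mul_right_cancel₀ (hc.trans_le h3).ne' ?_
  rw [h1, h2]
  ring

theorem integral_dr_sub_eq [IsProbabilityMeasure P] (hrand : Randomization P J X Z S Y)
    (hmono : Monotonicity P J S) (hPI : PrincipalIgnorability P J X S Y)
    (hpos : Positivity P J X S) {z g : ℕ} (hz : z ∈ Icc 1 J) (hg : g ∈ Icc (J - z + 1) J)
    {mz : Ω → ℝ} (hmz : (fun ω => mz ω * piZ P Z z * pscore P X S J z ω)
      =ᵐ[P] P[fun ω => Yobs J Z Y ω * Sobs J Z S ω * indic Z z ω | mX X])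
    {pt : ℕ → 𝒳 → ℝ} (hp₁ : BoundedXMeasurable X (workP X pt (J - g + 1)))
    (hp₀ : BoundedXMeasurable X (workP X pt (J - g))) {f m : Ω → ℝ}
    (hf : BoundedXMeasurable X f) (hm : BoundedXMeasurable X m) :
    ∫ ω, (f ω * (indic Z z ω * Sobs J Z S ω * (Yobs J Z Y ω - m ω) / piZ P Z z)
        + m ω * (psiSW P X Z S J pt (J - g + 1) ω - psiSW P X Z S J pt (J - g) ω)) ∂P
      - ∫ ω, Y z ω * indG J S g ω ∂P
      = ∫ ω, (f ω * pscore P X S J z ω - eg P X J S g ω) * (mz ω - m ω) ∂P := by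
  obtain ⟨hz1, hzJ⟩ := mem_Icc.1 hz
  have hg' : g ∈ Icc 1 J := by simp only [mem_Icc] at hg ⊢; omega
  obtain ⟨hg1, hgJ⟩ := mem_Icc.1 hg'
  have hpz : pscore P X S J z = P[S z | mX X] := by
    rw [pscore_eq_condExp_survival hzJ, survival_of_ne_zero (by omega)]
  have hobs : ∀ ω, f ω * (indic Z z ω * Sobs J Z S ω * (Yobs J Z Y ω - m ω) / piZ P Z z)
      = f ω * (indic Z z ω * (S z ω * (Y z ω - m ω)) / piZ P Z z) := fun ω => by
    linear_combination (f ω / piZ P Z z) * ((Yobs J Z Y ω - m ω) * indic_mul_Sobs (S := S) hz ω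
      + S z ω * indic_mul_Yobs (Y := Y) hz ω)
  have hipw : Integrable (fun ω => f ω * (indic Z z ω * (S z ω * (Y z ω - m ω)) / piZ P Z z)) P :=
    hf.integrable_mul hset.hX (((hset.integrable_S_mul_sub z (hm.integrable hset.hX)).bdd_mul
      (measurable_indic hset.hZ z).aestronglyMeasurable
      (.of_forall (norm_indic_le_one z))).div_const _)
  have haug : Integrable (fun ω => m ω
      * (psiSW P X Z S J pt (J - g + 1) ω - psiSW P X Z S J pt (J - g) ω)) P :=
    hm.integrable_mul hset.hX ((hset.integrable_psiSW (by omega) hp₁).sub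
      (hset.integrable_psiSW (by omega) hp₀))
  have hfm : Integrable (fun ω =>
      f ω * (P[fun ω => Y z ω * S z ω | mX X] ω - m ω * P[S z | mX X] ω)) P :=
    hf.integrable_mul hset.hX
      (integrable_condExp.sub (hm.integrable_mul hset.hX integrable_condExp))
  have hmeg : Integrable (fun ω => m ω * P[indG J S g | mX X] ω) P :=
    hm.integrable_mul hset.hX integrable_condExp
  simp_rw [hobs]
  rw [integral_add hipw haug, hset.integral_mul_ipw_outcome hrand hz hf hm,
    hset.integral_mul_psiSW_sub hrand hmono hg' hp₁ hp₀ hm,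
    ← hm.integral_mul_condExp hset.hX (hset.integrable_indG g),
    ← integral_condExp (mX_le hset.hX) (f := fun ω => Y z ω * indG J S g ω),
    ← integral_add hfm hmeg, ← integral_sub ?_ integrable_condExp]
  swap
  · exact hfm.add hmeg
  refine integral_congr_ae ?_
  filter_upwards [hset.condExp_mul_S_ae_eq hrand hz hmz,
    hset.condExp_mul_indG_ae_eq hrand hmono hPI hpos hz hg hmz] with ω hW hYG
  simp only [eg, ← hpz, hW, hYG]
  ring

lemma integral_indG [IsFiniteMeasure P] (g : ℕ) :
    ∫ ω, indG J S g ω ∂P = (P {ω | Gsum J S ω = (g : ℝ)}).toReal := by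
  rw [indG, integral_indicator_const _ (hset.measurableSet_Gsum_eq g), smul_eq_mul, mul_one,
    measureReal_def]

lemma integral_psiSW_sub [IsProbabilityMeasure P] (hrand : Randomization P J X Z S Y)
    (hmono : Monotonicity P J S) {pt : ℕ → 𝒳 → ℝ} {g : ℕ} (hg : g ∈ Icc 1 J)
    (hp₁ : BoundedXMeasurable X (workP X pt (J - g + 1)))
    (hp₀ : BoundedXMeasurable X (workP X pt (J - g))) :
    ∫ ω, (psiSW P X Z S J pt (J - g + 1) ω - psiSW P X Z S J pt (J - g) ω) ∂P
      = (P {ω | Gsum J S ω = (g : ℝ)}).toReal := by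
  simpa only [one_mul, hset.integral_indG] using
    hset.integral_mul_psiSW_sub hrand hmono hg hp₁ hp₀ (.const 1)

lemma ratio_mul_pscore_ae_eq [IsFiniteMeasure P] (hmono : Monotonicity P J S)
    (hpos : Positivity P J X S) {z g : ℕ} (hz : z ∈ Icc 1 J) (hg : g ∈ Icc (J - z + 1) J)
    {pt : ℕ → 𝒳 → ℝ}
    (hcorrect : ∀ w ∈ ({J - g, J - g + 1, z} : Set ℕ), workP X pt w =ᵐ[P] pscore P X S J w) :
    (fun ω => (workP X pt (J - g + 1) ω - workP X pt (J - g) ω) / workP X pt z ω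
      * pscore P X S J z ω) =ᵐ[P] eg P X J S g := by
  obtain ⟨c, hc, hcp⟩ := hpos
  have hg' : g ∈ Icc 1 J := by simp only [mem_Icc] at hz hg ⊢; omega
  filter_upwards [hcorrect (J - g) (by simp), hcorrect (J - g + 1) (by simp),
    hcorrect z (by simp), hcp z hz, hset.eg_ae_eq_pscore_sub hmono hg'] with ω h₀ h₁ hpz hc' he
  rw [h₀, h₁, hpz, he, div_mul_cancel₀ _ (hc.trans_le hc').ne']
  rfl

end Setup

end Potential

theorem statement10_general (P : Measure Ω) [IsProbabilityMeasure P] (J : ℕ)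
    (X : Ω → 𝒳) (Z : Ω → ℕ) (S Y : ℕ → Ω → ℝ)
    (hset : Setup P J X Z S Y)
    (hrand : Randomization P J X Z S Y)
    (hmono : Monotonicity P J S)
    (hPI : PrincipalIgnorability P J X S Y)
    (hpos : Positivity P J X S)
    (z g : ℕ) (hz : z ∈ Finset.Icc 1 J) (hg : g ∈ Finset.Icc (J - z + 1) J)
    (mz : Ω → ℝ)
    (hmz : (fun ω => mz ω * piZ P Z z * pscore P X S J z ω)
      =ᵐ[P] P[fun ω => Yobs J Z Y ω * Sobs J Z S ω * indic Z z ω | mX X])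
    (cw : ℝ) (hcw : 0 < cw ∧ cw < 1 / 2)
    (pt : ℕ → 𝒳 → ℝ) (mt : 𝒳 → ℝ)
    (hptm : ∀ w ∈ ({J - g, J - g + 1, z} : Set ℕ), Measurable (pt w))
    (hptb : ∀ w ∈ ({J - g, J - g + 1, z} : Set ℕ), w ≠ 0 →
      ∀ x, pt w x ∈ Set.Icc cw (1 - cw))
    (hmtm : Measurable mt) (hmtb : ∃ C, ∀ x, |mt x| ≤ C)
    (hdr : (∀ w ∈ ({J - g, J - g + 1, z} : Set ℕ), workP X pt w =ᵐ[P] pscore P X S J w)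
      ∨ (fun ω => mt (X ω)) =ᵐ[P] mz) :
    (∫ ω,
        ((workP X pt (J - g + 1) ω - workP X pt (J - g) ω) / workP X pt z ω
            * (indic Z z ω * Sobs J Z S ω * (Yobs J Z Y ω - mt (X ω)) / piZ P Z z)
          + mt (X ω) * (psiSW P X Z S J pt (J - g + 1) ω - psiSW P X Z S J pt (J - g) ω)) ∂P
      = ∫ ω, Y z ω * indG J S g ω ∂P) ∧
    (∫ ω, (psiSW P X Z S J pt (J - g + 1) ω - psiSW P X Z S J pt (J - g) ω) ∂P
      = (P {ω | Gsum J S ω = (g : ℝ)}).toReal) ∧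
    (0 < (P {ω | Gsum J S ω = (g : ℝ)}).toReal →
      (∫ ω,
          ((workP X pt (J - g + 1) ω - workP X pt (J - g) ω) / workP X pt z ω
              * (indic Z z ω * Sobs J Z S ω * (Yobs J Z Y ω - mt (X ω)) / piZ P Z z)
            + mt (X ω)
              * (psiSW P X Z S J pt (J - g + 1) ω - psiSW P X Z S J pt (J - g) ω)) ∂P)
        / (∫ ω, (psiSW P X Z S J pt (J - g + 1) ω - psiSW P X Z S J pt (J - g) ω) ∂P)
        = (∫ ω, Y z ω * indG J S g ω ∂P) / (P {ω | Gsum J S ω = (g : ℝ)}).toReal) := by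
  have hg' : g ∈ Icc 1 J := by simp only [mem_Icc] at hz hg ⊢; omega
  have hz0 : z ≠ 0 := by simp only [mem_Icc] at hz; omega
  have hwork : ∀ w ∈ ({J - g, J - g + 1, z} : Set ℕ), BoundedXMeasurable X (workP X pt w) :=
    fun w hw => .workP (hptm w hw) (hptb w hw)
  have hp₀ := hwork (J - g) (by simp)
  have hp₁ := hwork (J - g + 1) (by simp)
  have hf := (hp₁.sub hp₀).div_of_le (hwork z (by simp)) hcw.1 fun ω => by
    simpa [workP, hz0] using (hptb z (by simp) hz0 (X ω)).1
  obtain ⟨C, hC⟩ := hmtb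
  have hbias := hset.integral_dr_sub_eq hrand hmono hPI hpos hz hg hmz hp₁ hp₀ hf
    (.comp hmtm hC)
  have hbias_zero : ∫ ω, ((workP X pt (J - g + 1) ω - workP X pt (J - g) ω) / workP X pt z ω
            * pscore P X S J z ω - eg P X J S g ω) * (mz ω - mt (X ω)) ∂P = 0 := by
    refine integral_eq_zero_of_ae ?_
    rcases hdr with hcorrect | hcorrect
    · filter_upwards [hset.ratio_mul_pscore_ae_eq hmono hpos hz hg hcorrect] with ω hω
      rw [Pi.zero_apply, hω, sub_self, zero_mul]
    · filter_upwards [hcorrect] with ω hω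
      rw [Pi.zero_apply, hω, sub_self, mul_zero]
  have h₁ := sub_eq_zero.1 (hbias.trans hbias_zero)
  have h₂ := hset.integral_psiSW_sub hrand hmono hg' hp₁ hp₀
  exact ⟨h₁, h₂, fun _ => by rw [h₁, h₂]⟩

/-- **population double robustness of the DR estimating function.**
If either the working principal scores or the working outcome regression is correct, then
`E[ξ̃] = E[Y_z·1(G=g)]` and `E[ψ̃_{S,J−g+1} − ψ̃_{S,J−g}] = P(G=g)`; in particular, if
`P(G=g) > 0` the ratio identifies `E[Y_z·1(G=g)]/P(G=g)`. -/
theorem statement10 (P : Measure Ω) [IsProbabilityMeasure P] (J : ℕ)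
    (X : Ω → 𝒳) (Z : Ω → ℕ) (S Y : ℕ → Ω → ℝ)
    (hset : Setup P J X Z S Y)
    (hrand : Randomization P J X Z S Y)
    (hmono : Monotonicity P J S)
    (hPI : PrincipalIgnorability P J X S Y)
    (hpos : Positivity P J X S)
    (z g : ℕ) (hz : z ∈ Finset.Icc 1 J) (hg : g ∈ Finset.Icc (J - z + 1) J)
    (mz : Ω → ℝ) (hmzm : Measurable[mX X] mz)
    (hmz : (fun ω => mz ω * piZ P Z z * pscore P X S J z ω)
      =ᵐ[P] P[fun ω => Yobs J Z Y ω * Sobs J Z S ω * indic Z z ω | mX X])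
    (cw : ℝ) (hcw : 0 < cw ∧ cw < 1 / 2)
    (pt : ℕ → 𝒳 → ℝ) (mt : 𝒳 → ℝ)
    (hptm : ∀ w ∈ ({J - g, J - g + 1, z} : Set ℕ), Measurable (pt w))
    (hptb : ∀ w ∈ ({J - g, J - g + 1, z} : Set ℕ), w ≠ 0 →
      ∀ x, pt w x ∈ Set.Icc cw (1 - cw))
    (hmtm : Measurable mt) (hmtb : ∃ C, ∀ x, |mt x| ≤ C)
    (hdr : (∀ w ∈ ({J - g, J - g + 1, z} : Set ℕ), workP X pt w =ᵐ[P] pscore P X S J w)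
      ∨ (fun ω => mt (X ω)) =ᵐ[P] mz) :
    (∫ ω,
        ((workP X pt (J - g + 1) ω - workP X pt (J - g) ω) / workP X pt z ω
            * (indic Z z ω * Sobs J Z S ω * (Yobs J Z Y ω - mt (X ω)) / piZ P Z z)
          + mt (X ω) * (psiSW P X Z S J pt (J - g + 1) ω - psiSW P X Z S J pt (J - g) ω)) ∂P
      = ∫ ω, Y z ω * indG J S g ω ∂P) ∧
    (∫ ω, (psiSW P X Z S J pt (J - g + 1) ω - psiSW P X Z S J pt (J - g) ω) ∂P
      = (P {ω | Gsum J S ω = (g : ℝ)}).toReal) ∧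
    (0 < (P {ω | Gsum J S ω = (g : ℝ)}).toReal →
      (∫ ω,
          ((workP X pt (J - g + 1) ω - workP X pt (J - g) ω) / workP X pt z ω
              * (indic Z z ω * Sobs J Z S ω * (Yobs J Z Y ω - mt (X ω)) / piZ P Z z)
            + mt (X ω)
              * (psiSW P X Z S J pt (J - g + 1) ω - psiSW P X Z S J pt (J - g) ω)) ∂P)
        / (∫ ω, (psiSW P X Z S J pt (J - g + 1) ω - psiSW P X Z S J pt (J - g) ω) ∂P)
        = (∫ ω, Y z ω * indG J S g ω ∂P) / (P {ω | Gsum J S ω = (g : ℝ)}).toReal) :=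
  statement10_general P J X Z S Y hset hrand hmono hPI hpos z g hz hg mz hmz cw hcw pt mt hptm hptb
    hmtm hmtb hdr

end TruncationByDeath
end
end

section
/- (Observational weighting identification.) Under treatment ignorability, monotonicity, principal ignorability and positivity, for every z ∈ {1,...,J} and every g ∈ {J−z+1,...,J}: E[Y_z·1(G=g)] = E[((p_{J−g+1}(X) − p_{J−g}(X))/p_z(X))·(1(Z=z)/π_z(X))·Y·S]. -/
/-!
Under monotonicity every potential-survival profile `w ↦ S_w` is a threshold sequence:
`S_w = 1` exactly when `w ≥ J + 1 - G`. Hence `1(G = g) = S_{J-g+1} - S_{J-g}` and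
`S_z = ∑_{g ≥ J-z+1} 1(G = g)`, so that `e_g = p_{J-g+1} - p_{J-g}` and
`p_z = ∑_{g ≥ J-z+1} e_g`.
Summing the principal-ignorability identities over the strata compatible with survival under `z`
gives `E[Y_z 1(G=g) | X] = (e_g / p_z) E[Y_z S_z | X]`, and treatment ignorability turns
`E[Y_z S_z | X]` into `E[1(Z=z) Y S | X] / π_z`. The resulting weight is σ(X)-measurable and
bounded by positivity, so it can be moved inside the conditional expectation before integrating.
-/

open MeasureTheory ProbabilityTheory

noncomputable section

namespace TruncationByDeath

variable {Ω : Type*} {𝒳 : Type*} [MeasurableSpace Ω] [MeasurableSpace 𝒳]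

/-- Basic setup with bounded potential outcomes (observational setting). -/
structure SetupB (P : Measure Ω) (J : ℕ) (X : Ω → 𝒳) (Z : Ω → ℕ)
    (S Y : ℕ → Ω → ℝ) : Prop where
  hJ : 2 ≤ J
  hX : Measurable X
  hZ : Measurable Z
  hZr : ∀ ω, Z ω ∈ Finset.Icc 1 J
  hSm : ∀ z, Measurable (S z)
  hS01 : ∀ z ω, S z ω = 0 ∨ S z ω = 1
  hYm : ∀ z, Measurable (Y z)
  hYbd : ∃ C, ∀ z ω, |Y z ω| ≤ C

/-- Generalized propensity score `π_z(X) := E[1(Z=z) | σ(X)]`. -/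
def piX (P : Measure Ω) (X : Ω → 𝒳) (Z : Ω → ℕ) (z : ℕ) : Ω → ℝ :=
  P[indic Z z | mX X]

/-- Treatment ignorability in the observational setting: the generalized propensity scores
are bounded away from zero, and conditionally on `σ(X)` the treatment indicator factorizes
from any bounded measurable functional of the potential values. -/
def TreatmentIgnorability (P : Measure Ω) (J : ℕ) (X : Ω → 𝒳) (Z : Ω → ℕ)
    (S Y : ℕ → Ω → ℝ) : Prop :=
  (∃ c : ℝ, 0 < c ∧ ∀ z ∈ Finset.Icc 1 J, ∀ᵐ ω ∂P, c ≤ piX P X Z z ω) ∧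
  ∀ z ∈ Finset.Icc 1 J, ∀ φ : (ℕ → ℝ) → (ℕ → ℝ) → ℝ,
    Measurable (Function.uncurry φ) → (∃ C, ∀ s y, |φ s y| ≤ C) →
    P[fun ω => indic Z z ω * φ (fun w => S w ω) (fun w => Y w ω) | mX X]
      =ᵐ[P] fun ω => piX P X Z z ω
        * (P[fun ω' => φ (fun w => S w ω') (fun w => Y w ω') | mX X]) ω

section MonotoneZeroOne

open Finset

variable {J : ℕ} {a : ℕ → ℝ}

/-- The same conventions `p_0 = 0`, `p_{J+1} = 1` as in `pscore`. -/
def extendSeq (J : ℕ) (a : ℕ → ℝ) (n : ℕ) : ℝ :=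
  if n = 0 then 0 else if n = J + 1 then 1 else a n

theorem exists_sum_eq_and_eq_one_iff (h01 : ∀ w, a w = 0 ∨ a w = 1)
    (hmono : ∀ w ∈ Icc 1 J, ∀ w' ∈ Icc 1 J, w' ≤ w → a w' ≤ a w) :
    ∃ k ≤ J, ∑ w ∈ Icc 1 J, a w = k ∧ ∀ w ∈ Icc 1 J, (a w = 1 ↔ J + 1 ≤ w + k) := by
  classical
  set F := (Icc 1 J).filter (a · = 1)
  refine ⟨#F, (card_filter_le _ _).trans (by simp), ?_, fun w hw => ?_⟩
  · rw [← sum_boole]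
    refine sum_congr rfl fun w _ => ?_
    rcases h01 w with h | h <;> simp [h]
  obtain ⟨hw1, hwJ⟩ := mem_Icc.1 hw
  refine ⟨fun haw => ?_, fun hk => ?_⟩
  · have hsub : Icc w J ⊆ F := fun u hu => by
      have hu' : u ∈ Icc 1 J := mem_Icc.2 ⟨hw1.trans (mem_Icc.1 hu).1, (mem_Icc.1 hu).2⟩
      have := hmono u hu' w hw (mem_Icc.1 hu).1
      refine mem_filter.2 ⟨hu', (h01 u).resolve_left fun h => ?_⟩
      linarith
    have := card_le_card hsub
    simp only [Nat.card_Icc] at this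
    omega
  · by_contra haw
    have hsub : F ⊆ Icc (w + 1) J := fun u hu => by
      obtain ⟨hu', hau⟩ := mem_filter.1 hu
      refine mem_Icc.2 ⟨Nat.lt_of_not_le fun huw => haw ?_, (mem_Icc.1 hu').2⟩
      have := hmono w hw u hu' huw
      rcases h01 w with h | h <;> [linarith; exact h]
    have := card_le_card hsub
    simp only [Nat.card_Icc] at this
    omega

theorem ite_sum_eq_extendSeq_sub (h01 : ∀ w, a w = 0 ∨ a w = 1)
    (hmono : ∀ w ∈ Icc 1 J, ∀ w' ∈ Icc 1 J, w' ≤ w → a w' ≤ a w) {g : ℕ} (hg : g ≤ J) :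
    (if ∑ w ∈ Icc 1 J, a w = g then (1 : ℝ) else 0)
      = extendSeq J a (J - g + 1) - extendSeq J a (J - g) := by
  obtain ⟨k, hkJ, hsum, hiff⟩ := exists_sum_eq_and_eq_one_iff h01 hmono
  have hext : ∀ n ≤ J + 1, extendSeq J a n = if J + 1 ≤ n + k then 1 else 0 := by
    intro n hn
    rcases (by omega : n = 0 ∨ n = J + 1 ∨ 1 ≤ n ∧ n ≤ J) with rfl | rfl | hn'
    · simp only [extendSeq, if_pos, if_neg (by omega : ¬J + 1 ≤ 0 + k)]
    · simp [extendSeq]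
    · rw [extendSeq, if_neg (by omega), if_neg (by omega)]
      have hiffn := hiff n (mem_Icc.2 hn')
      split_ifs with hle
      · exact hiffn.2 hle
      · exact (h01 n).resolve_right (mt hiffn.1 hle)
  simp only [hsum, Nat.cast_inj]
  rw [hext _ (by omega), hext _ (by omega)]
  split_ifs <;> first | omega | norm_num

theorem eq_sum_ite_sum_eq (h01 : ∀ w, a w = 0 ∨ a w = 1)
    (hmono : ∀ w ∈ Icc 1 J, ∀ w' ∈ Icc 1 J, w' ≤ w → a w' ≤ a w) {z : ℕ} (hz : z ∈ Icc 1 J) :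
    a z = ∑ g ∈ Icc (J - z + 1) J, if ∑ w ∈ Icc 1 J, a w = g then (1 : ℝ) else 0 := by
  obtain ⟨k, hkJ, hsum, hiff⟩ := exists_sum_eq_and_eq_one_iff h01 hmono
  simp_rw [hsum, Nat.cast_inj, sum_ite_eq, mem_Icc]
  have := mem_Icc.1 hz
  rcases h01 z with h | h
  · rw [if_neg, h]
    exact fun hk => by have := (hiff z hz).2 (by omega); linarith
  · rw [if_pos ⟨by have := (hiff z hz).1 h; omega, hkJ⟩, h]

theorem extendSeq_eq_zero_or_one (h01 : ∀ w, a w = 0 ∨ a w = 1) (n : ℕ) :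
    extendSeq J a n = 0 ∨ extendSeq J a n = 1 := by
  unfold extendSeq
  split_ifs <;> simp [h01]

end MonotoneZeroOne

theorem integral_mul_condExp {α : Type*} {m m0 : MeasurableSpace α} {μ : Measure α}
    [IsFiniteMeasure μ] (hm : m ≤ m0) {f g : α → ℝ} (hf : StronglyMeasurable[m] f) {c : ℝ}
    (hfc : ∀ᵐ x ∂μ, ‖f x‖ ≤ c) (hg : Integrable g μ) :
    ∫ x, f x * μ[g | m] x ∂μ = ∫ x, f x * g x ∂μ :=
  calc ∫ x, f x * μ[g | m] x ∂μ = ∫ x, μ[f * g | m] x ∂μ :=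
        integral_congr_ae (condExp_stronglyMeasurable_mul_of_bound hm hf hg c hfc).symm
    _ = ∫ x, f x * g x ∂μ := integral_condExp hm

theorem condExp_ae_eq_sum_of_ae_eq {α ι : Type*} {m m0 : MeasurableSpace α} {μ : Measure α}
    {f : α → ℝ} {s : Finset ι} {g : ι → α → ℝ} (h : f =ᵐ[μ] ∑ i ∈ s, g i)
    (hg : ∀ i ∈ s, Integrable (g i) μ) : μ[f | m] =ᵐ[μ] ∑ i ∈ s, μ[g i | m] :=
  (condExp_congr_ae h).trans (condExp_finsetSum hg m)

section Identification

open Finset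

variable {P : Measure Ω} {J : ℕ} {X : Ω → 𝒳} {Z : Ω → ℕ} {S Y : ℕ → Ω → ℝ}

omit [MeasurableSpace Ω] in
theorem indG_apply (g : ℕ) (ω : Ω) :
    indG J S g ω = if ∑ w ∈ Icc 1 J, S w ω = g then 1 else 0 := by
  simp [indG, Gsum, Set.indicator_apply]

theorem measurable_indG (hSm : ∀ z, Measurable (S z)) (g : ℕ) : Measurable (indG J S g) :=
  measurable_const.indicator
    (measurableSet_eq_fun (Finset.measurable_sum _ fun z _ => hSm z) measurable_const)

theorem integrable_indG [IsFiniteMeasure P] (hSm : ∀ z, Measurable (S z)) (g : ℕ) :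
    Integrable (indG J S g) P := by
  refine .of_bound (measurable_indG hSm g).aestronglyMeasurable 1 (ae_of_all _ fun ω => ?_)
  rw [indG_apply]
  split_ifs <;> simp

theorem integrable_extendSeq [IsFiniteMeasure P] (hSm : ∀ z, Measurable (S z))
    (h01 : ∀ z ω, S z ω = 0 ∨ S z ω = 1) (n : ℕ) :
    Integrable (fun ω => extendSeq J (S · ω) n) P := by
  unfold extendSeq
  split_ifs
  · exact integrable_const 0
  · exact integrable_const 1
  · refine .of_bound (hSm n).aestronglyMeasurable 1 (ae_of_all _ fun ω => ?_)
    rcases h01 n ω with h | h <;> simp [h]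

theorem Monotonicity.ae_forall (h : Monotonicity P J S) :
    ∀ᵐ ω ∂P, ∀ w ∈ Icc 1 J, ∀ w' ∈ Icc 1 J, w' ≤ w → S w' ω ≤ S w ω := by
  simp only [Filter.eventually_all_finset, Filter.eventually_imp_distrib_left]
  exact h

theorem ae_eq_sum_indG (h01 : ∀ z ω, S z ω = 0 ∨ S z ω = 1) (hmono : Monotonicity P J S)
    {z : ℕ} (hz : z ∈ Icc 1 J) : S z =ᵐ[P] ∑ g ∈ Icc (J - z + 1) J, indG J S g := by
  filter_upwards [hmono.ae_forall] with ω hω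
  simp only [Finset.sum_apply, indG_apply]
  exact eq_sum_ite_sum_eq (fun w => h01 w ω) hω hz

theorem indG_ae_eq_extendSeq_sub (h01 : ∀ z ω, S z ω = 0 ∨ S z ω = 1)
    (hmono : Monotonicity P J S) {g : ℕ} (hg : g ≤ J) :
    indG J S g =ᵐ[P]
      fun ω => extendSeq J (S · ω) (J - g + 1) - extendSeq J (S · ω) (J - g) := by
  filter_upwards [hmono.ae_forall] with ω hω
  rw [indG_apply]
  exact ite_sum_eq_extendSeq_sub (fun w => h01 w ω) hω hg

theorem pscore_of_mem_Icc {z : ℕ} (hz : z ∈ Icc 1 J) : pscore P X S J z = P[S z | mX X] := by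
  have := mem_Icc.1 hz
  rw [pscore, if_neg (by omega), if_neg (by omega)]

theorem stronglyMeasurable_pscore (n : ℕ) : StronglyMeasurable[mX X] (pscore P X S J n) := by
  unfold pscore
  split_ifs
  exacts [stronglyMeasurable_const, stronglyMeasurable_const, stronglyMeasurable_condExp]

theorem pscore_eq_condExp [IsFiniteMeasure P] (hm : mX X ≤ ‹MeasurableSpace Ω›) (n : ℕ) :
    pscore P X S J n = P[fun ω => extendSeq J (S · ω) n | mX X] := by
  unfold pscore extendSeq
  split_ifs <;> simp [condExp_const hm]

theorem pscore_ae_mem_Icc [IsFiniteMeasure P] (hm : mX X ≤ ‹MeasurableSpace Ω›)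
    (hSm : ∀ z, Measurable (S z)) (h01 : ∀ z ω, S z ω = 0 ∨ S z ω = 1) (n : ℕ) :
    ∀ᵐ ω ∂P, pscore P X S J n ω ∈ Set.Icc 0 1 := by
  have hval := fun ω => extendSeq_eq_zero_or_one (J := J) (fun w => h01 w ω) n
  have hnonneg : (0 : Ω → ℝ) ≤ᵐ[P] fun ω => extendSeq J (S · ω) n :=
    ae_of_all _ fun ω => by rcases hval ω with h | h <;> simp [h]
  have hle_one : (fun ω => extendSeq J (S · ω) n) ≤ᵐ[P] fun _ => (1 : ℝ) :=
    ae_of_all _ fun ω => by rcases hval ω with h | h <;> simp [h]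
  have hle := condExp_mono (m := mX X) (integrable_extendSeq hSm h01 n) (integrable_const 1)
    hle_one
  rw [condExp_const hm] at hle
  rw [pscore_eq_condExp hm]
  filter_upwards [condExp_nonneg hnonneg, hle] with ω h0 h1 using ⟨h0, h1⟩

theorem eg_ae_eq_pscore_sub [IsFiniteMeasure P] (hm : mX X ≤ ‹MeasurableSpace Ω›)
    (hSm : ∀ z, Measurable (S z)) (h01 : ∀ z ω, S z ω = 0 ∨ S z ω = 1)
    (hmono : Monotonicity P J S) {g : ℕ} (hg : g ≤ J) :
    eg P X J S g =ᵐ[P] pscore P X S J (J - g + 1) - pscore P X S J (J - g) := by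
  rw [pscore_eq_condExp hm, pscore_eq_condExp hm]
  exact (condExp_congr_ae (indG_ae_eq_extendSeq_sub h01 hmono hg)).trans
    (condExp_sub (integrable_extendSeq hSm h01 _) (integrable_extendSeq hSm h01 _) _)

theorem pscore_ae_eq_sum_eg [IsFiniteMeasure P] (hSm : ∀ z, Measurable (S z))
    (h01 : ∀ z ω, S z ω = 0 ∨ S z ω = 1) (hmono : Monotonicity P J S) {z : ℕ}
    (hz : z ∈ Icc 1 J) : pscore P X S J z =ᵐ[P] ∑ g ∈ Icc (J - z + 1) J, eg P X J S g := by
  rw [pscore_of_mem_Icc hz]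
  exact condExp_ae_eq_sum_of_ae_eq (ae_eq_sum_indG h01 hmono hz)
    fun g _ => integrable_indG hSm g

theorem condExp_mul_ae_eq_sum [IsFiniteMeasure P] (hSm : ∀ z, Measurable (S z))
    (h01 : ∀ z ω, S z ω = 0 ∨ S z ω = 1) (hmono : Monotonicity P J S) {z : ℕ}
    (hz : z ∈ Icc 1 J) (hY : Integrable (Y z) P) :
    P[fun ω => Y z ω * S z ω | mX X] =ᵐ[P]
      ∑ g ∈ Icc (J - z + 1) J, P[fun ω => Y z ω * indG J S g ω | mX X] := by
  refine condExp_ae_eq_sum_of_ae_eq ?_ fun g _ =>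
    hY.mul_bdd (c := 1) (measurable_indG hSm g).aestronglyMeasurable
      (ae_of_all _ fun ω => by rw [indG_apply]; split_ifs <;> simp)
  filter_upwards [ae_eq_sum_indG h01 hmono hz] with ω hω
  simp only [Finset.sum_apply, hω, mul_sum]

theorem PrincipalIgnorability.condExp_mul_pscore_ae_eq [IsFiniteMeasure P]
    (hPI : PrincipalIgnorability P J X S Y) (hSm : ∀ z, Measurable (S z))
    (h01 : ∀ z ω, S z ω = 0 ∨ S z ω = 1) (hmono : Monotonicity P J S) {z g : ℕ}
    (hz : z ∈ Icc 1 J) (hg : g ∈ Icc (J - z + 1) J) (hY : Integrable (Y z) P) :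
    (fun ω => P[fun ω' => Y z ω' * indG J S g ω' | mX X] ω * pscore P X S J z ω) =ᵐ[P]
      fun ω => eg P X J S g ω * P[fun ω' => Y z ω' * S z ω' | mX X] ω := by
  filter_upwards [pscore_ae_eq_sum_eg (X := X) hSm h01 hmono hz,
    condExp_mul_ae_eq_sum (X := X) hSm h01 hmono hz hY,
    (Filter.eventually_all_finset _).2 (hPI z hz g hg)] with ω hp hQ hPIω
  rw [hp, hQ, Finset.sum_apply, Finset.sum_apply, mul_sum, mul_sum]
  exact sum_congr rfl fun g' hg' => (hPIω g' hg').trans (mul_comm _ _)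

/-- Clamping `φ` to `[-C, C]` gives a bounded functional that agrees with `φ` on the values
taken, to which treatment ignorability applies. -/
theorem TreatmentIgnorability.condExp_indic_mul (hTI : TreatmentIgnorability P J X Z S Y)
    {z : ℕ} (hz : z ∈ Icc 1 J) {φ : (ℕ → ℝ) → (ℕ → ℝ) → ℝ}
    (hφ : Measurable (Function.uncurry φ)) {C : ℝ} (hC : ∀ ω, |φ (S · ω) (Y · ω)| ≤ C) :
    P[fun ω => indic Z z ω * φ (S · ω) (Y · ω) | mX X] =ᵐ[P]
      fun ω => piX P X Z z ω * P[fun ω' => φ (S · ω') (Y · ω') | mX X] ω := by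
  set ψ : (ℕ → ℝ) → (ℕ → ℝ) → ℝ := fun s y => max (-C) (min C (φ s y))
  have hψm : Measurable (Function.uncurry ψ) :=
    show Measurable fun p => max (-C) (min C (Function.uncurry φ p)) from
      measurable_const.max (measurable_const.min hφ)
  have hψC : ∀ s y, |ψ s y| ≤ |C| := fun s y =>
    abs_le.2 ⟨(neg_le_neg (le_abs_self C)).trans (le_max_left _ _),
      max_le (neg_le_abs C) ((min_le_left _ _).trans (le_abs_self C))⟩
  have hψφ : ∀ ω, ψ (S · ω) (Y · ω) = φ (S · ω) (Y · ω) := fun ω => by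
    obtain ⟨hlo, hhi⟩ := abs_le.1 (hC ω)
    simp only [ψ, min_eq_right hhi, max_eq_right hlo]
  simpa only [hψφ] using hTI.2 z hz ψ hψm ⟨|C|, hψC⟩

def obsWeight (P : Measure Ω) (J : ℕ) (X : Ω → 𝒳) (Z : Ω → ℕ) (S : ℕ → Ω → ℝ) (z g : ℕ) :
    Ω → ℝ := fun ω =>
  (pscore P X S J (J - g + 1) ω - pscore P X S J (J - g) ω) / pscore P X S J z ω
    / piX P X Z z ω

theorem stronglyMeasurable_obsWeight (z g : ℕ) :
    StronglyMeasurable[mX X] (obsWeight P J X Z S z g) :=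
  ((((stronglyMeasurable_pscore _).measurable.sub (stronglyMeasurable_pscore _).measurable).div
    (stronglyMeasurable_pscore _).measurable).div
    stronglyMeasurable_condExp.measurable).stronglyMeasurable

theorem obsWeight_ae_norm_le [IsFiniteMeasure P] (hm : mX X ≤ ‹MeasurableSpace Ω›)
    (hSm : ∀ z, Measurable (S z)) (h01 : ∀ z ω, S z ω = 0 ∨ S z ω = 1) {z g : ℕ} {c cπ : ℝ}
    (hc : 0 < c) (hcπ : 0 < cπ) (hp : ∀ᵐ ω ∂P, c ≤ pscore P X S J z ω)
    (hπ : ∀ᵐ ω ∂P, cπ ≤ piX P X Z z ω) :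
    ∀ᵐ ω ∂P, ‖obsWeight P J X Z S z g ω‖ ≤ 1 / c / cπ := by
  filter_upwards [hp, hπ, pscore_ae_mem_Icc (J := J) hm hSm h01 (J - g + 1),
    pscore_ae_mem_Icc (J := J) hm hSm h01 (J - g)] with ω hpω hπω ⟨h1lo, h1hi⟩ ⟨h0lo, h0hi⟩
  have hdiff : |pscore P X S J (J - g + 1) ω - pscore P X S J (J - g) ω| ≤ 1 :=
    abs_le.2 ⟨by linarith, by linarith⟩
  rw [obsWeight, Real.norm_eq_abs, abs_div, abs_div, abs_of_pos (hc.trans_le hpω),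
    abs_of_pos (hcπ.trans_le hπω)]
  exact div_le_div₀ (by positivity) (div_le_div₀ zero_le_one hdiff hc hpω) hcπ hπω

theorem condExp_stratum_ae_eq_obsWeight_mul [IsFiniteMeasure P]
    (hm : mX X ≤ ‹MeasurableSpace Ω›) (hSm : ∀ z, Measurable (S z))
    (h01 : ∀ z ω, S z ω = 0 ∨ S z ω = 1) (hTI : TreatmentIgnorability P J X Z S Y)
    (hmono : Monotonicity P J S) (hPI : PrincipalIgnorability P J X S Y) {z g : ℕ}
    (hz : z ∈ Icc 1 J) (hg : g ∈ Icc (J - z + 1) J) (hY : Integrable (Y z) P) {C : ℝ}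
    (hYC : ∀ ω, |Y z ω| ≤ C) (hp : ∀ᵐ ω ∂P, pscore P X S J z ω ≠ 0)
    (hπ : ∀ᵐ ω ∂P, piX P X Z z ω ≠ 0) :
    P[fun ω => Y z ω * indG J S g ω | mX X] =ᵐ[P] fun ω =>
      obsWeight P J X Z S z g ω * P[fun ω' => indic Z z ω' * (Y z ω' * S z ω') | mX X] ω := by
  have hYS : ∀ ω, |Y z ω * S z ω| ≤ C := fun ω => by
    rw [abs_mul]
    exact mul_le_of_le_one_right (abs_nonneg _) (by rcases h01 z ω with h | h <;> simp [h])
      |>.trans (hYC ω)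
  have hTIz := hTI.condExp_indic_mul hz (φ := fun s y => y z * s z)
    (((measurable_pi_apply z).comp measurable_snd).mul
      ((measurable_pi_apply z).comp measurable_fst)) hYS
  filter_upwards [hTIz, hPI.condExp_mul_pscore_ae_eq hSm h01 hmono hz hg hY,
    eg_ae_eq_pscore_sub hm hSm h01 hmono (mem_Icc.1 hg).2, hp, hπ]
    with ω hTIω hPIω hegω hpω hπω
  rw [hTIω, obsWeight, ← Pi.sub_apply, ← hegω]
  field_simp
  linear_combination hPIω

theorem integrable_indic_mul_mul [IsFiniteMeasure P] (hZ : Measurable Z)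
    (hSm : ∀ z, Measurable (S z)) (h01 : ∀ z ω, S z ω = 0 ∨ S z ω = 1) {z : ℕ}
    (hY : Integrable (Y z) P) : Integrable (fun ω => indic Z z ω * (Y z ω * S z ω)) P := by
  have hYS : Integrable (fun ω => Y z ω * S z ω) P :=
    hY.mul_bdd (c := 1) (hSm z).aestronglyMeasurable
      (ae_of_all _ fun ω => by rcases h01 z ω with h | h <;> simp [h])
  refine hYS.bdd_mul (c := 1) ?_ (ae_of_all _ fun ω => by unfold indic; split_ifs <;> simp)
  exact (measurable_const.ite (hZ (measurableSet_singleton z))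
    measurable_const).aestronglyMeasurable

omit [MeasurableSpace Ω] in
theorem sum_indic_mul_of_mem {s : Finset ℕ} {f : ℕ → Ω → ℝ} {ω : Ω} (h : Z ω ∈ s) :
    ∑ w ∈ s, indic Z w ω * f w ω = f (Z ω) ω := by
  rw [sum_eq_single_of_mem _ h fun w _ hw => by simp [indic, Ne.symm hw]]
  simp [indic]

omit [MeasurableSpace Ω] in
theorem indic_mul_Yobs_mul_Sobs {z : ℕ} (hz : z ∈ Icc 1 J) (ω : Ω) :
    indic Z z ω * (Yobs J Z Y ω * Sobs J Z S ω) = indic Z z ω * (Y z ω * S z ω) := by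
  by_cases h : Z ω = z
  · rw [Yobs, Sobs, sum_indic_mul_of_mem (h ▸ hz), sum_indic_mul_of_mem (h ▸ hz), h]
  · simp [indic, h]

end Identification

/-- **observational weighting identification.** Under treatment
ignorability, monotonicity, principal ignorability and positivity, for every `z ∈ {1,…,J}`
and `g ∈ {J−z+1,…,J}`:
`E[Y_z·1(G=g)] = E[((p_{J−g+1}(X) − p_{J−g}(X))/p_z(X)) · (1(Z=z)/π_z(X)) · Y·S]`. -/
theorem statement14 (P : Measure Ω) [IsProbabilityMeasure P] (J : ℕ)
    (X : Ω → 𝒳) (Z : Ω → ℕ) (S Y : ℕ → Ω → ℝ)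
    (hset : SetupB P J X Z S Y)
    (hTI : TreatmentIgnorability P J X Z S Y)
    (hmono : Monotonicity P J S)
    (hPI : PrincipalIgnorability P J X S Y)
    (hpos : Positivity P J X S) :
    ∀ z ∈ Finset.Icc 1 J, ∀ g ∈ Finset.Icc (J - z + 1) J,
      ∫ ω, Y z ω * indG J S g ω ∂P
        = ∫ ω, ((pscore P X S J (J - g + 1) ω - pscore P X S J (J - g) ω)
              / pscore P X S J z ω)
            * (indic Z z ω / piX P X Z z ω) * (Yobs J Z Y ω * Sobs J Z S ω) ∂P := by
  intro z hz g hg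
  obtain ⟨c, hc, hpc⟩ := hpos
  obtain ⟨cπ, hcπ, hπc⟩ := hTI.1
  obtain ⟨C, hC⟩ := hset.hYbd
  have hm : mX X ≤ ‹MeasurableSpace Ω› := hset.hX.comap_le
  have hY : Integrable (Y z) P :=
    .of_bound (hset.hYm z).aestronglyMeasurable C (ae_of_all _ (hC z))
  calc ∫ ω, Y z ω * indG J S g ω ∂P
      = ∫ ω, P[fun ω' => Y z ω' * indG J S g ω' | mX X] ω ∂P := (integral_condExp hm).symm
    _ = ∫ ω, obsWeight P J X Z S z g ω
          * P[fun ω' => indic Z z ω' * (Y z ω' * S z ω') | mX X] ω ∂P :=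
        integral_congr_ae <| condExp_stratum_ae_eq_obsWeight_mul hm hset.hSm hset.hS01 hTI
          hmono hPI hz hg hY (hC z) ((hpc z hz).mono fun ω h => (hc.trans_le h).ne')
          ((hπc z hz).mono fun ω h => (hcπ.trans_le h).ne')
    _ = ∫ ω, obsWeight P J X Z S z g ω * (indic Z z ω * (Y z ω * S z ω)) ∂P :=
        integral_mul_condExp hm (stronglyMeasurable_obsWeight z g)
          (obsWeight_ae_norm_le hm hset.hSm hset.hS01 hc hcπ (hpc z hz) (hπc z hz))
          (integrable_indic_mul_mul hset.hZ hset.hSm hset.hS01 hY)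
    _ = _ := integral_congr_ae <| ae_of_all _ fun ω => by
        dsimp only
        rw [← indic_mul_Yobs_mul_Sobs hz, obsWeight]
        ring

end TruncationByDeath
end
end
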